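/- Let A_N be chosen uniformly from a 2-independent pseudo-Wigner ensemble of order N and let x ∈ ℝ^N satisfy ‖x‖ = 1. Then the random variable ξ = xᵀ A_N x satisfies E[ξ] = 0 and Var(ξ) ≤ 1/(2N). -/

import Mathlib

/-!
Write `ε_p = 2√N A_p ∈ {±1}` for the upper-triangular entries. For `±1`-valued variables,
`ε = 2·[ε = 1] - 1`, so one- and two-point uniformity give `E ε_p = 0` and `E ε_p ε_q = 0` for
`p ≠ q`, while `ε_p² = 1`. Hence `E A_{ij} = 0` and `E A_{ij} A_{kl} = 1/(4N)` if `{i,j} = {k,l}`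
and `0` otherwise. Expanding `ξ = ∑ x_i x_j A_{ij}` gives `E ξ = 0` and
`E ξ² = (∑_i x_i⁴ + 2 ∑_{i≠j} x_i² x_j²)/(4N) ≤ 2 (∑ x_i²)²/(4N) = 1/(2N)`.
-/

open Matrix Finset

noncomputable section

namespace PW

/-- `S_N`: symmetric `N × N` matrices with entries `± 1/(2√N)`. -/
def IsSignMatrix (N : ℕ) (A : Matrix (Fin N) (Fin N) ℝ) : Prop :=
  A.IsSymm ∧ ∀ i j, A i j = 1 / (2 * Real.sqrt N) ∨ A i j = -(1 / (2 * Real.sqrt N))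

open Classical in
/-- An `r`-independent pseudo-Wigner ensemble of order `N`: a nonempty finite set of
matrices of `S_N`, such that under the uniform measure the upper-triangular entries
scaled by `2√N` are `r`-wise independent, uniform on `{-1, 1}`. -/
def IsPseudoWigner (N r : ℕ) (E : Finset (Matrix (Fin N) (Fin N) ℝ)) : Prop :=
  E.Nonempty ∧ (∀ A ∈ E, IsSignMatrix N A) ∧
  ∀ s : Finset (Fin N × Fin N), (∀ p ∈ s, p.1 ≤ p.2) → s.card ≤ r →
    ∀ b : Fin N × Fin N → ℝ, (∀ p, b p = 1 ∨ b p = -1) →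
      ((E.filter fun A => ∀ p ∈ s, 2 * Real.sqrt N * A p.1 p.2 = b p).card : ℝ) / E.card
        = (1 / 2 : ℝ) ^ s.card

/-- Expectation with respect to the uniform measure on a finite set. -/
def expect {α : Type*} (E : Finset α) (f : α → ℝ) : ℝ := (∑ a ∈ E, f a) / E.card

open Classical in
/-- Probability of an event with respect to the uniform measure on a finite set. -/
def prob {α : Type*} (E : Finset α) (P : α → Prop) : ℝ :=
  ((E.filter P).card : ℝ) / E.card

/-- `p`-th central moment of `f` under the uniform measure on `E`. -/
def centralMoment {α : Type*} (E : Finset α) (f : α → ℝ) (p : ℕ) : ℝ :=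
  expect E (fun a => (f a - expect E f) ^ p)

/-- The `l`-th empirical spectral moment `β_l(A) = Tr(A^l)/N`. -/
def betaMom {N : ℕ} (l : ℕ) (A : Matrix (Fin N) (Fin N) ℝ) : ℝ :=
  (A ^ l).trace / N

/-- The `l`-th moment of the standard semicircular law. -/
def scMom (l : ℕ) : ℝ :=
  ∫ x in (-1:ℝ)..1, x ^ l * (2 / Real.pi * Real.sqrt (1 - x ^ 2))

open Classical in
/-- Empirical spectral c.d.f. of a (symmetric) matrix. -/
def ecdf {N : ℕ} (A : Matrix (Fin N) (Fin N) ℝ) (x : ℝ) : ℝ :=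
  if hA : A.IsHermitian then
    ((Finset.univ.filter fun i => hA.eigenvalues i ≤ x).card : ℝ) / N
  else 0

/-- The c.d.f. of the standard semicircular law. -/
def Fsc (x : ℝ) : ℝ :=
  if x < -1 then 0
  else if x ≤ 1 then 1 / 2 + (1 / Real.pi) * x * Real.sqrt (1 - x ^ 2)
      + (1 / Real.pi) * Real.arcsin x
  else 1

/-- The symmetric sign matrix determined by sign choices on the upper triangle. -/
def signMatrixOf (N : ℕ) (s : Fin N × Fin N → Bool) : Matrix (Fin N) (Fin N) ℝ :=
  Matrix.of fun i j =>
    if i ≤ j then (if s (i, j) then 1 else -1) / (2 * Real.sqrt N)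
    else (if s (j, i) then 1 else -1) / (2 * Real.sqrt N)

/-- The Wigner ensemble `W_N`: the set `S_N` of all symmetric `±1/(2√N)` matrices
(endowed with the uniform measure). -/
def wignerFinset (N : ℕ) : Finset (Matrix (Fin N) (Fin N) ℝ) :=
  Finset.image (signMatrixOf N) Finset.univ

section SortPair

variable {ι : Type*} [LinearOrder ι]

def sortPair (p : ι × ι) : ι × ι := (min p.1 p.2, max p.1 p.2)

theorem sortPair_fst_le_snd (p : ι × ι) : (sortPair p).1 ≤ (sortPair p).2 := min_le_max

theorem apply_sortPair {β : Type*} {g : ι → ι → β} (hg : ∀ a b, g a b = g b a) (p : ι × ι) :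
    g (sortPair p).1 (sortPair p).2 = g p.1 p.2 := by
  rcases le_total p.1 p.2 with h | h
  · simp [sortPair, h]
  · simp [sortPair, h, hg p.1]

theorem eq_or_eq_swap_of_sortPair_eq {p q : ι × ι} (h : sortPair p = sortPair q) :
    q = p ∨ q = p.swap := by
  obtain ⟨a, b⟩ := p
  obtain ⟨c, d⟩ := q
  simp only [sortPair, Prod.mk.injEq, Prod.swap_prod_mk] at h ⊢
  rcases le_total a b with hab | hab <;> rcases le_total c d with hcd | hcd <;>
    simp_all

theorem sum_sum_ite_sortPair_eq_le [Fintype ι] (x : ι → ℝ) :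
    ∑ p : ι × ι, ∑ q : ι × ι,
        (if sortPair p = sortPair q then x p.1 * x p.2 * (x q.1 * x q.2) else 0)
      ≤ 2 * (∑ i, x i ^ 2) ^ 2 := by
  -- The fibre of `sortPair` through `p` lies in `{p, p.swap}`, and on it the summand is
  -- `(x p.1 * x p.2) ^ 2`.
  have fibre (p q : ι × ι) :
      (if sortPair p = sortPair q then x p.1 * x p.2 * (x q.1 * x q.2) else 0)
        ≤ (if p = q then (x p.1 * x p.2) ^ 2 else 0)
          + (if p.swap = q then (x p.1 * x p.2) ^ 2 else 0) := by
    by_cases h : sortPair p = sortPair q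
    · have hm := apply_sortPair (g := fun a b => x a * x b) (fun a b => mul_comm _ _) q
      rw [← h, apply_sortPair (g := fun a b => x a * x b) (fun a b => mul_comm _ _) p] at hm
      rw [if_pos h, ← hm, ← sq]
      rcases eq_or_eq_swap_of_sortPair_eq h with rfl | rfl
      · rw [if_pos rfl, le_add_iff_nonneg_right]
        positivity
      · rw [if_pos rfl, le_add_iff_nonneg_left]
        positivity
    · rw [if_neg h]
      positivity
  calc _ ≤ ∑ p : ι × ι, 2 * (x p.1 * x p.2) ^ 2 := by
        gcongr with p
        refine (sum_le_sum fun q _ => fibre p q).trans_eq ?_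
        rw [sum_add_distrib, sum_ite_eq, sum_ite_eq]
        simp only [mem_univ, if_true]
        ring
    _ = 2 * (∑ i, x i ^ 2) ^ 2 := by
        rw [← mul_sum, Fintype.sum_prod_type, sq (∑ i, x i ^ 2), sum_mul_sum]
        simp only [mul_pow]

end SortPair

theorem dotProduct_mulVec_self_eq_sum {ι : Type*} [Fintype ι] (x : ι → ℝ)
    (A : Matrix ι ι ℝ) : x ⬝ᵥ A *ᵥ x = ∑ p : ι × ι, x p.1 * x p.2 * A p.1 p.2 := by
  simp only [dotProduct, mulVec, mul_sum, Fintype.sum_prod_type]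
  exact sum_congr rfl fun i _ => sum_congr rfl fun j _ => by ring

section SignSums

variable {α : Type*} {s : Finset α} {f g : α → ℝ}

theorem sum_sign_eq_zero (hf : ∀ a ∈ s, f a = 1 ∨ f a = -1)
    (hf₁ : 2 * #(s.filter (f · = 1)) = #s) : ∑ a ∈ s, f a = 0 := by
  have hsign : ∀ a ∈ s, f a = 2 * (if f a = 1 then 1 else 0) - 1 := by
    intro a ha
    rcases hf a ha with h | h <;> norm_num [h]
  rw [sum_congr rfl hsign, sum_sub_distrib, ← mul_sum, sum_boole, sum_const, nsmul_one]
  exact sub_eq_zero.2 (by exact_mod_cast hf₁)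

theorem sum_sign_mul_sign_eq_zero (hf : ∀ a ∈ s, f a = 1 ∨ f a = -1)
    (hg : ∀ a ∈ s, g a = 1 ∨ g a = -1) (hf₁ : 2 * #(s.filter (f · = 1)) = #s)
    (hg₁ : 2 * #(s.filter (g · = 1)) = #s)
    (hfg₁ : 4 * #(s.filter fun a => f a = 1 ∧ g a = 1) = #s) :
    ∑ a ∈ s, f a * g a = 0 := by
  have hsign : ∀ a ∈ s, f a * g a = 4 * (if f a = 1 ∧ g a = 1 then 1 else 0)
      - 2 * (if f a = 1 then 1 else 0) - 2 * (if g a = 1 then 1 else 0) + 1 := by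
    intro a ha
    rcases hf a ha with h | h <;> rcases hg a ha with h' | h' <;> norm_num [h, h']
  rw [sum_congr rfl hsign]
  simp only [sum_add_distrib, sum_sub_distrib, ← mul_sum, sum_boole, sum_const, nsmul_one]
  have hf₁' : (2 : ℝ) * #(s.filter (f · = 1)) = #s := by exact_mod_cast hf₁
  have hg₁' : (2 : ℝ) * #(s.filter (g · = 1)) = #s := by exact_mod_cast hg₁
  have hfg₁' : (4 : ℝ) * #(s.filter fun a => f a = 1 ∧ g a = 1) = #s := by exact_mod_cast hfg₁
  linarith

end SignSums

section Ensemble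

variable {N r : ℕ} {E : Finset (Matrix (Fin N) (Fin N) ℝ)}

theorem IsSignMatrix.scaled_entry_eq_one_or_eq_neg_one {A : Matrix (Fin N) (Fin N) ℝ}
    (hA : IsSignMatrix N A) (i j : Fin N) :
    2 * √N * A i j = 1 ∨ 2 * √N * A i j = -1 := by
  have : √(N : ℝ) ≠ 0 := (Real.sqrt_pos.2 (by exact_mod_cast i.pos)).ne'
  rcases hA.2 i j with h | h <;> [left; right] <;> rw [h] <;> field_simp

theorem IsSignMatrix.entry_mul_self {A : Matrix (Fin N) (Fin N) ℝ}
    (hA : IsSignMatrix N A) (i j : Fin N) : A i j * A i j = 1 / (4 * N) := by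
  have : √(N : ℝ) ≠ 0 := (Real.sqrt_pos.2 (by exact_mod_cast i.pos)).ne'
  have hN : (N : ℝ) ≠ 0 := by exact_mod_cast i.pos.ne'
  rcases hA.2 i j with h | h <;> rw [h] <;> field_simp <;> norm_num

theorem IsPseudoWigner.two_mul_card_filter_scaled_entry (hE : IsPseudoWigner N r E)
    (hr : 1 ≤ r) {p : Fin N × Fin N} (hp : p.1 ≤ p.2) :
    2 * #(E.filter fun A => 2 * √N * A p.1 p.2 = 1) = #E := by
  have h := hE.2.2 {p} (by simpa using hp) (by simpa using hr) (fun _ => 1) (by simp)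
  simp only [mem_singleton, forall_eq, card_singleton, pow_one] at h
  have hE0 : (#E : ℝ) ≠ 0 := by exact_mod_cast hE.1.card_pos.ne'
  field_simp at h
  exact_mod_cast h

theorem IsPseudoWigner.four_mul_card_filter_scaled_entry_and (hE : IsPseudoWigner N r E)
    (hr : 2 ≤ r) {p q : Fin N × Fin N} (hp : p.1 ≤ p.2) (hq : q.1 ≤ q.2) (hpq : p ≠ q) :
    4 * #(E.filter fun A => 2 * √N * A p.1 p.2 = 1 ∧ 2 * √N * A q.1 q.2 = 1) = #E := by
  have h := hE.2.2 {p, q} (by simp [hp, hq]) (by rwa [card_pair hpq]) (fun _ => 1) (by simp)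
  simp only [mem_insert, mem_singleton, forall_eq_or_imp, forall_eq, card_pair hpq] at h
  have hE0 : (#E : ℝ) ≠ 0 := by exact_mod_cast hE.1.card_pos.ne'
  field_simp at h
  norm_num at h
  exact_mod_cast h

theorem IsPseudoWigner.sum_entry (hE : IsPseudoWigner N r E) (hr : 1 ≤ r) (i j : Fin N) :
    ∑ A ∈ E, A i j = 0 := by
  set p := sortPair (i, j)
  have hsymm : ∀ A ∈ E, A i j = A p.1 p.2 := fun A hA =>
    (apply_sortPair (fun a b => ((hE.2.1 A hA).1.apply a b).symm) (i, j)).symm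
  have hscaled : ∑ A ∈ E, 2 * √N * A p.1 p.2 = 0 :=
    sum_sign_eq_zero (fun A hA => (hE.2.1 A hA).scaled_entry_eq_one_or_eq_neg_one _ _)
      (hE.two_mul_card_filter_scaled_entry hr (sortPair_fst_le_snd _))
  have hscale : 2 * √(N : ℝ) ≠ 0 := by
    have := Real.sqrt_pos.2 (show (0 : ℝ) < N by exact_mod_cast i.pos)
    positivity
  rw [← mul_sum, mul_eq_zero] at hscaled
  rw [sum_congr rfl hsymm]
  exact hscaled.resolve_left hscale

theorem IsPseudoWigner.sum_entry_mul_entry (hE : IsPseudoWigner N r E) (hr : 2 ≤ r)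
    (p q : Fin N × Fin N) :
    ∑ A ∈ E, A p.1 p.2 * A q.1 q.2
      = if sortPair p = sortPair q then (#E : ℝ) / (4 * N) else 0 := by
  have hsymm : ∀ A ∈ E, A p.1 p.2 * A q.1 q.2
      = A (sortPair p).1 (sortPair p).2 * A (sortPair q).1 (sortPair q).2 := fun A hA => by
    have hA : ∀ a b, A a b = A b a := fun a b => ((hE.2.1 A hA).1.apply a b).symm
    rw [apply_sortPair hA, apply_sortPair hA]
  rw [sum_congr rfl hsymm]
  split_ifs with h
  · rw [h, sum_congr rfl fun A hA => (hE.2.1 A hA).entry_mul_self _ _, sum_const, nsmul_eq_mul,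
      mul_one_div]
  · have hscaled : ∑ A ∈ E, (2 * √N * A (sortPair p).1 (sortPair p).2)
        * (2 * √N * A (sortPair q).1 (sortPair q).2) = 0 :=
      sum_sign_mul_sign_eq_zero
        (fun A hA => (hE.2.1 A hA).scaled_entry_eq_one_or_eq_neg_one _ _)
        (fun A hA => (hE.2.1 A hA).scaled_entry_eq_one_or_eq_neg_one _ _)
        (hE.two_mul_card_filter_scaled_entry (hr.trans' one_le_two) (sortPair_fst_le_snd _))
        (hE.two_mul_card_filter_scaled_entry (hr.trans' one_le_two) (sortPair_fst_le_snd _))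
        (hE.four_mul_card_filter_scaled_entry_and hr (sortPair_fst_le_snd _)
          (sortPair_fst_le_snd _) h)
    have hN : (0 : ℝ) < N := by exact_mod_cast p.1.pos
    have h4N : (2 * √(N : ℝ)) * (2 * √N) = 4 * N := by
      rw [mul_mul_mul_comm, Real.mul_self_sqrt hN.le]
      ring
    have hprod : (4 * N : ℝ) * ∑ A ∈ E,
        A (sortPair p).1 (sortPair p).2 * A (sortPair q).1 (sortPair q).2 = 0 := by
      rw [← hscaled, mul_sum]
      exact sum_congr rfl fun A _ => by rw [← h4N]; ring
    exact (mul_eq_zero.1 hprod).resolve_left (by positivity)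

theorem IsPseudoWigner.sum_dotProduct_mulVec_self (hE : IsPseudoWigner N r E) (hr : 1 ≤ r)
    (x : Fin N → ℝ) : ∑ A ∈ E, x ⬝ᵥ A *ᵥ x = 0 := by
  simp_rw [dotProduct_mulVec_self_eq_sum]
  rw [sum_comm]
  exact sum_eq_zero fun p _ => by rw [← mul_sum, hE.sum_entry hr, mul_zero]

theorem IsPseudoWigner.sum_dotProduct_mulVec_self_sq_le (hE : IsPseudoWigner N r E)
    (hr : 2 ≤ r) (x : Fin N → ℝ) :
    ∑ A ∈ E, (x ⬝ᵥ A *ᵥ x) ^ 2 ≤ (#E : ℝ) / (4 * N) * (2 * (∑ i, x i ^ 2) ^ 2) :=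
  calc ∑ A ∈ E, (x ⬝ᵥ A *ᵥ x) ^ 2
      = ∑ p : Fin N × Fin N, ∑ q : Fin N × Fin N,
          x p.1 * x p.2 * (x q.1 * x q.2) * ∑ A ∈ E, A p.1 p.2 * A q.1 q.2 := by
        simp_rw [dotProduct_mulVec_self_eq_sum, sq, sum_mul_sum, mul_sum]
        rw [sum_comm]
        refine sum_congr rfl fun p _ => ?_
        rw [sum_comm]
        exact sum_congr rfl fun q _ => sum_congr rfl fun A _ => by ring
    _ = (#E : ℝ) / (4 * N) * ∑ p : Fin N × Fin N, ∑ q : Fin N × Fin N,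
          (if sortPair p = sortPair q then x p.1 * x p.2 * (x q.1 * x q.2) else 0) := by
        simp_rw [hE.sum_entry_mul_entry hr, mul_sum]
        exact sum_congr rfl fun p _ => sum_congr rfl fun q _ => by split_ifs <;> ring
    _ ≤ (#E : ℝ) / (4 * N) * (2 * (∑ i, x i ^ 2) ^ 2) := by
        gcongr
        exact sum_sum_ite_sortPair_eq_le x

end Ensemble

/-- part of Lemma 8 of the paper: for `A_N` uniform on a `2`-independent
pseudo-Wigner ensemble of order `N` and a unit vector `x ∈ ℝ^N`, the random variable
`ξ = xᵀ A_N x` has mean `0` and variance at most `1/(2N)`. -/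
theorem stmt9 (N : ℕ) (E : Finset (Matrix (Fin N) (Fin N) ℝ))
    (hE : IsPseudoWigner N 2 E) (x : Fin N → ℝ) (hx : ∑ i, x i ^ 2 = 1) :
    expect E (fun A => x ⬝ᵥ A.mulVec x) = 0 ∧
    centralMoment E (fun A => x ⬝ᵥ A.mulVec x) 2 ≤ 1 / (2 * N) := by
  have hmean : expect E (fun A => x ⬝ᵥ A *ᵥ x) = 0 := by
    rw [expect, hE.sum_dotProduct_mulVec_self one_le_two, zero_div]
  refine ⟨hmean, ?_⟩
  have hE0 : (0 : ℝ) < #E := by exact_mod_cast hE.1.card_pos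
  calc centralMoment E (fun A => x ⬝ᵥ A *ᵥ x) 2
      = (∑ A ∈ E, (x ⬝ᵥ A *ᵥ x) ^ 2) / #E := by
        rw [centralMoment, hmean]
        simp only [sub_zero, expect]
    _ ≤ #E / (4 * N) * (2 * 1 ^ 2) / #E := by
        gcongr
        rw [← hx]
        exact hE.sum_dotProduct_mulVec_self_sq_le le_rfl x
    _ = 1 / (2 * N) := by
        field_simp
        ring

end PW
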